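/- arXiv:2409.18309 — 3 statements merged into one kernel-verified Lean document; each statement's English description precedes it below -/
import Mathlib

section
/- Let d ∈ ℕ and j ∈ ℤ. For every θ ∈ [0,1] and all nonnegative functions f, g ∈ L^1(ℝ^d), one has ‖I_j^θ(f,g)‖_{L^{1/2}(ℝ^d)} ≤ 2^{dj} 3^d 5^{2d} ‖f‖_{L^1(ℝ^d)} ‖g‖_{L^1(ℝ^d)}, i.e., (∫_{ℝ^d} I_j^θ(f,g)(x)^{1/2} dx)² ≤ 2^{dj} 3^d 5^{2d} ‖f‖_{L^1} ‖g‖_{L^1}. -/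
open MeasureTheory ENNReal

/-- The bilinear operator `I_j^θ(f,g)(x) = ∫_{|y| ≤ 2^j} f(x + (θ−1)y) g(x + θy) dy`. -/
noncomputable def Ij (d : ℕ) (j : ℤ) (θ : ℝ)
    (f g : EuclideanSpace ℝ (Fin d) → ℝ≥0∞) (x : EuclideanSpace ℝ (Fin d)) : ℝ≥0∞ :=
  ∫⁻ y in {y : EuclideanSpace ℝ (Fin d) | ‖y‖ ≤ (2 : ℝ) ^ j},
    f (x + (θ - 1) • y) * g (x + θ • y)

/-!
On a cube `Q` of side `2 ^ j`, Cauchy–Schwarz gives `∫_Q I^{1/2} ≤ |Q|^{1/2} (∫_Q I)^{1/2}`, and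
Tonelli with translation invariance gives `∫_Q I ≤ ∫_{3Q} f · ∫_{5Q} g`, because
`x + (θ - 1) y ∈ 3Q` and `x + θ y ∈ 5Q` whenever `x ∈ Q` and `|y| ≤ 2 ^ j`. Summing over the
tiling of `ℝᵈ` by such cubes, Cauchy–Schwarz for series and the fact that the enlarged cubes
`3Q` and `5Q` cover every point exactly `3ᵈ` and `5ᵈ` times give
`∫ I^{1/2} ≤ (2^{dj} 3ᵈ 5ᵈ ‖f‖₁ ‖g‖₁)^{1/2}`.
-/

section Cube

variable {d : ℕ} {s : ℝ} {a b : ℤ} {n : Fin d → ℤ}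

/-- For `a = 0, b = 1` these cubes tile `ℝᵈ`; `cube d s (-k) (k + 1) n` is the concentric cube
`2k + 1` times larger. -/
def cube (d : ℕ) (s : ℝ) (a b : ℤ) (n : Fin d → ℤ) : Set (EuclideanSpace ℝ (Fin d)) :=
  {x | ∀ i, ((n i + a : ℤ) : ℝ) * s ≤ x i ∧ x i < ((n i + b : ℤ) : ℝ) * s}

lemma cube_eq_preimage_pi (d : ℕ) (s : ℝ) (a b : ℤ) (n : Fin d → ℤ) :
    cube d s a b n = (MeasurableEquiv.toLp 2 (Fin d → ℝ)).symm ⁻¹'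
      Set.univ.pi fun i => Set.Ico (((n i + a : ℤ) : ℝ) * s) (((n i + b : ℤ) : ℝ) * s) := by
  ext x
  simp [cube]

lemma measurableSet_cube (d : ℕ) (s : ℝ) (a b : ℤ) (n : Fin d → ℤ) :
    MeasurableSet (cube d s a b n) := by
  rw [cube_eq_preimage_pi]
  exact (MeasurableEquiv.toLp 2 (Fin d → ℝ)).symm.measurable
    (MeasurableSet.univ_pi fun _ => measurableSet_Ico)

lemma volume_cube (d : ℕ) (s : ℝ) (a b : ℤ) (n : Fin d → ℤ) :
    volume (cube d s a b n) = ENNReal.ofReal ((b - a : ℤ) * s) ^ d := by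
  rw [cube_eq_preimage_pi, (EuclideanSpace.volume_preserving_symm_measurableEquiv_toLp
    (Fin d)).measure_preimage (MeasurableSet.univ_pi fun _ => measurableSet_Ico).nullMeasurableSet,
    volume_pi_pi]
  have side : ∀ i, ENNReal.ofReal (((n i + b : ℤ) : ℝ) * s - ((n i + a : ℤ) : ℝ) * s) =
      ENNReal.ofReal ((b - a : ℤ) * s) := fun i => by push_cast; ring_nf
  simp only [Real.volume_Ico, side, Finset.prod_const, Finset.card_univ, Fintype.card_fin]

lemma mem_cube_iff (hs : 0 < s) {x : EuclideanSpace ℝ (Fin d)} :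
    x ∈ cube d s a b n ↔ ∀ i, n i ∈ Finset.Ioc (⌊x i / s⌋ - b) (⌊x i / s⌋ - a) := by
  refine forall_congr' fun i => ?_
  rw [Finset.mem_Ioc, ← le_div_iff₀ hs, ← Int.le_floor, ← div_lt_iff₀ hs, ← Int.floor_lt]
  omega

lemma add_mem_cube_of_norm_le {x v : EuclideanSpace ℝ (Fin d)} (hx : x ∈ cube d s a b n)
    (hv : ‖v‖ ≤ s) : x + v ∈ cube d s (a - 1) (b + 1) n := by
  intro i
  have hvi : |v i| ≤ s := (PiLp.norm_apply_le v i).trans hv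
  obtain ⟨h₁, h₂⟩ := hx i
  push_cast at h₁ h₂ ⊢
  simp only [PiLp.add_apply]
  constructor <;> linarith [abs_le.1 hvi]

lemma tsum_indicator_cube (hs : 0 < s) (x : EuclideanSpace ℝ (Fin d)) :
    ∑' n, (cube d s a b n).indicator (1 : EuclideanSpace ℝ (Fin d) → ℝ≥0∞) x =
      ((b - a).toNat : ℝ≥0∞) ^ d := by
  set N := Fintype.piFinset fun i => Finset.Ioc (⌊x i / s⌋ - b) (⌊x i / s⌋ - a)
  have hN : ∀ n, x ∈ cube d s a b n ↔ n ∈ N := fun n => by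
    rw [mem_cube_iff hs, Fintype.mem_piFinset]
  rw [tsum_eq_sum fun n hn => Set.indicator_of_notMem (mt (hN n).1 hn) _,
    Finset.sum_congr rfl fun n hn => Set.indicator_of_mem ((hN n).2 hn) _]
  simp [N, Fintype.card_piFinset, Int.card_Ioc]

lemma tsum_setLIntegral_cube (hs : 0 < s) {h : EuclideanSpace ℝ (Fin d) → ℝ≥0∞}
    (hh : Measurable h) :
    ∑' n, ∫⁻ x in cube d s a b n, h x = ((b - a).toNat : ℝ≥0∞) ^ d * ∫⁻ x, h x := by
  have hind : ∀ n x, (cube d s a b n).indicator h x = (cube d s a b n).indicator 1 x * h x :=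
    fun n x => by simpa using Set.indicator_mul_left (cube d s a b n) 1 h
  rw [tsum_congr fun n => (lintegral_indicator (measurableSet_cube d s a b n) h).symm,
    ← lintegral_tsum fun n => (hh.indicator (measurableSet_cube _ _ _ _ n)).aemeasurable,
    ← lintegral_const_mul _ hh]
  simp_rw [hind, ENNReal.tsum_mul_right, tsum_indicator_cube hs]

end Cube

section CauchySchwarz

lemma rpow_half_rpow_two (a : ℝ≥0∞) : (a ^ (1 / 2 : ℝ)) ^ (2 : ℝ) = a := by
  rw [← ENNReal.rpow_mul]
  norm_num

lemma lintegral_rpow_half_le {α : Type*} [MeasurableSpace α] (μ : Measure α)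
    {h : α → ℝ≥0∞} (hh : AEMeasurable h μ) :
    ∫⁻ x, h x ^ (1 / 2 : ℝ) ∂μ ≤ μ Set.univ ^ (1 / 2 : ℝ) * (∫⁻ x, h x ∂μ) ^ (1 / 2 : ℝ) := by
  have := ENNReal.lintegral_mul_le_Lp_mul_Lq μ Real.HolderConjugate.two_two
    (hh.pow_const (1 / 2 : ℝ)) (aemeasurable_const (b := (1 : ℝ≥0∞)))
  simp only [Pi.mul_apply, mul_one, rpow_half_rpow_two, one_rpow, lintegral_const, one_mul]
    at this
  rwa [mul_comm]

lemma tsum_rpow_half_mul_le {ι : Type*} [Countable ι] (a b : ι → ℝ≥0∞) :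
    ∑' i, a i ^ (1 / 2 : ℝ) * b i ^ (1 / 2 : ℝ) ≤
      (∑' i, a i) ^ (1 / 2 : ℝ) * (∑' i, b i) ^ (1 / 2 : ℝ) := by
  let _ : MeasurableSpace ι := ⊤
  have := ENNReal.lintegral_mul_le_Lp_mul_Lq Measure.count Real.HolderConjugate.two_two
    (measurable_from_top (f := fun i => a i ^ (1 / 2 : ℝ))).aemeasurable
    (measurable_from_top (f := fun i => b i ^ (1 / 2 : ℝ))).aemeasurable
  simpa only [Pi.mul_apply, rpow_half_rpow_two, lintegral_count] using this

end CauchySchwarz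

section Ij

variable {d : ℕ} {j : ℤ} {θ : ℝ} {f g : EuclideanSpace ℝ (Fin d) → ℝ≥0∞}

lemma measurable_Ij (hf : Measurable f) (hg : Measurable g) : Measurable (Ij d j θ f g) := by
  unfold Ij
  fun_prop

lemma setLIntegral_Ij_le (hf : Measurable f) (hg : Measurable g)
    {Q Q' Q'' : Set (EuclideanSpace ℝ (Fin d))} (hQ : MeasurableSet Q) (hQ' : MeasurableSet Q')
    (hQ'' : MeasurableSet Q'')
    (hQQ' : ∀ x ∈ Q, ∀ y : EuclideanSpace ℝ (Fin d), ‖y‖ ≤ (2 : ℝ) ^ j → x + (θ - 1) • y ∈ Q')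
    (hQ'Q'' : ∀ u ∈ Q', ∀ y : EuclideanSpace ℝ (Fin d), ‖y‖ ≤ (2 : ℝ) ^ j → u + y ∈ Q'') :
    ∫⁻ x in Q, Ij d j θ f g x ≤ (∫⁻ u in Q', f u) * ∫⁻ v in Q'', g v := by
  set B := {y : EuclideanSpace ℝ (Fin d) | ‖y‖ ≤ (2 : ℝ) ^ j}
  have hB : MeasurableSet B := measurableSet_le measurable_norm measurable_const
  -- substitute `u = x + (θ - 1) • y`, so that `x + θ • y = u + y`
  have shift_f : ∀ y ∈ B,
      ∫⁻ x in Q, f (x + (θ - 1) • y) * g (x + θ • y) ≤ ∫⁻ u in Q', f u * g (u + y) := by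
    intro y hy
    rw [← lintegral_indicator hQ, ← lintegral_indicator hQ',
      ← lintegral_add_right_eq_self (Q'.indicator fun u => f u * g (u + y)) ((θ - 1) • y)]
    refine lintegral_mono fun x => Set.indicator_apply_le' (fun hx => ?_) fun _ => zero_le
    rw [Set.indicator_of_mem (hQQ' x hx y hy)]
    exact le_of_eq (by congr 2; module)
  have shift_g : ∀ u ∈ Q', ∫⁻ y in B, g (u + y) ≤ ∫⁻ v in Q'', g v := by
    intro u hu
    rw [← lintegral_indicator hB, ← lintegral_indicator hQ'',
      ← lintegral_add_left_eq_self (Q''.indicator g) u]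
    refine lintegral_mono fun y => Set.indicator_apply_le' (fun hy => ?_) fun _ => zero_le
    rw [Set.indicator_of_mem (hQ'Q'' u hu y hy)]
  calc ∫⁻ x in Q, Ij d j θ f g x
      = ∫⁻ y in B, ∫⁻ x in Q, f (x + (θ - 1) • y) * g (x + θ • y) :=
        lintegral_lintegral_swap (by fun_prop)
    _ ≤ ∫⁻ y in B, ∫⁻ u in Q', f u * g (u + y) := setLIntegral_mono' hB shift_f
    _ = ∫⁻ u in Q', f u * ∫⁻ y in B, g (u + y) := by
        rw [lintegral_lintegral_swap (by fun_prop)]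
        exact lintegral_congr fun u => lintegral_const_mul _ (by fun_prop)
    _ ≤ ∫⁻ u in Q', f u * ∫⁻ v in Q'', g v :=
        setLIntegral_mono' hQ' fun u hu => mul_le_mul_right (shift_g u hu) _
    _ = _ := lintegral_mul_const _ hf

lemma setLIntegral_Ij_cube_le (hθ : θ ∈ Set.Icc (0 : ℝ) 1) (hf : Measurable f)
    (hg : Measurable g) (n : Fin d → ℤ) :
    ∫⁻ x in cube d (2 ^ j) 0 1 n, Ij d j θ f g x ≤
      (∫⁻ u in cube d (2 ^ j) (-1) 2 n, f u) * ∫⁻ v in cube d (2 ^ j) (-2) 3 n, g v := by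
  refine setLIntegral_Ij_le hf hg (measurableSet_cube ..) (measurableSet_cube ..)
    (measurableSet_cube ..) (fun x hx y hy => ?_) fun u hu y hy => ?_
  · have hθy : ‖(θ - 1) • y‖ ≤ (2 : ℝ) ^ j := by
      rw [norm_smul, Real.norm_eq_abs, abs_of_nonpos (by linarith [hθ.2])]
      nlinarith [hθ.1, norm_nonneg y]
    simpa using add_mem_cube_of_norm_le hx hθy
  · simpa using add_mem_cube_of_norm_le hu hy

lemma volume_cube_two_zpow (n : Fin d → ℤ) :
    volume (cube d (2 ^ j) 0 1 n) = 2 ^ ((d : ℤ) * j) := by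
  rw [volume_cube, Int.sub_zero, Int.cast_one, one_mul,
    show (2 : ℝ) ^ j = ((2 : NNReal) ^ j : NNReal) by push_cast; rfl, ofReal_coe_nnreal,
    ← ENNReal.coe_pow, ← zpow_natCast, ← zpow_mul, mul_comm, ENNReal.coe_zpow two_ne_zero,
    coe_ofNat]

lemma lintegral_rpow_half_Ij_le (hθ : θ ∈ Set.Icc (0 : ℝ) 1) (hf : Measurable f)
    (hg : Measurable g) :
    ∫⁻ x, Ij d j θ f g x ^ (1 / 2 : ℝ) ≤
      (2 ^ ((d : ℤ) * j) * (3 ^ d * ∫⁻ u, f u) * (5 ^ d * ∫⁻ v, g v)) ^ (1 / 2 : ℝ) := by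
  have hs : (0 : ℝ) < 2 ^ j := zpow_pos two_pos j
  set F : (Fin d → ℤ) → ℝ≥0∞ := fun n => ∫⁻ u in cube d (2 ^ j) (-1) 2 n, f u
  set G : (Fin d → ℤ) → ℝ≥0∞ := fun n => ∫⁻ v in cube d (2 ^ j) (-2) 3 n, g v
  have on_cube : ∀ n, ∫⁻ x in cube d (2 ^ j) 0 1 n, Ij d j θ f g x ^ (1 / 2 : ℝ) ≤
      (2 ^ ((d : ℤ) * j)) ^ (1 / 2 : ℝ) * (F n ^ (1 / 2 : ℝ) * G n ^ (1 / 2 : ℝ)) := fun n => by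
    refine (lintegral_rpow_half_le _ (measurable_Ij hf hg).aemeasurable).trans ?_
    rw [Measure.restrict_apply_univ, volume_cube_two_zpow,
      ← ENNReal.mul_rpow_of_nonneg (F n) _ (by norm_num)]
    gcongr
    exact setLIntegral_Ij_cube_le hθ hf hg n
  calc ∫⁻ x, Ij d j θ f g x ^ (1 / 2 : ℝ)
      = ∑' n, ∫⁻ x in cube d (2 ^ j) 0 1 n, Ij d j θ f g x ^ (1 / 2 : ℝ) := by
        simpa using (tsum_setLIntegral_cube (a := 0) (b := 1) hs
          ((measurable_Ij hf hg).pow_const (1 / 2 : ℝ))).symm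
    _ ≤ ∑' n, (2 ^ ((d : ℤ) * j)) ^ (1 / 2 : ℝ) * (F n ^ (1 / 2 : ℝ) * G n ^ (1 / 2 : ℝ)) :=
        ENNReal.tsum_le_tsum on_cube
    _ ≤ (2 ^ ((d : ℤ) * j)) ^ (1 / 2 : ℝ) *
          ((∑' n, F n) ^ (1 / 2 : ℝ) * (∑' n, G n) ^ (1 / 2 : ℝ)) := by
        rw [ENNReal.tsum_mul_left]
        exact mul_le_mul_right (tsum_rpow_half_mul_le F G) _
    _ = _ := by
        rw [tsum_setLIntegral_cube hs hf, tsum_setLIntegral_cube hs hg]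
        simp only [ENNReal.mul_rpow_of_nonneg _ _ (show (0 : ℝ) ≤ 1 / 2 by norm_num),
          Int.reduceNeg, sub_neg_eq_add, Int.reduceAdd, Int.reduceToNat, Nat.cast_ofNat]
        ring

end Ij

theorem stmt5_general (d : ℕ) (j : ℤ) (θ : ℝ) (hθ : θ ∈ Set.Icc (0 : ℝ) 1)
    (f g : EuclideanSpace ℝ (Fin d) → ℝ≥0∞)
    (hf : Measurable f) (hg : Measurable g) :
    (∫⁻ x, (Ij d j θ f g x) ^ ((1 : ℝ) / 2)) ^ (2 : ℕ) ≤
      (2 : ℝ≥0∞) ^ ((d : ℤ) * j) * (3 ^ d * 5 ^ (2 * d) : ℝ≥0∞) *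
        (∫⁻ x, f x) * (∫⁻ x, g x) := by
  calc (∫⁻ x, Ij d j θ f g x ^ ((1 : ℝ) / 2)) ^ 2
      ≤ ((2 ^ ((d : ℤ) * j) * (3 ^ d * ∫⁻ u, f u) * (5 ^ d * ∫⁻ v, g v)) ^ (1 / 2 : ℝ)) ^ 2 :=
        pow_le_pow_left' (lintegral_rpow_half_Ij_le hθ hf hg) 2
    _ = 2 ^ ((d : ℤ) * j) * (3 ^ d * 5 ^ d) * (∫⁻ u, f u) * ∫⁻ v, g v := by
        rw [← ENNReal.rpow_natCast, Nat.cast_ofNat, rpow_half_rpow_two]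
        ring
    _ ≤ _ := by
        gcongr
        · norm_num
        · omega

theorem stmt5 (d : ℕ) (j : ℤ) (θ : ℝ) (hθ : θ ∈ Set.Icc (0 : ℝ) 1)
    (f g : EuclideanSpace ℝ (Fin d) → ℝ≥0∞)
    (hf : Measurable f) (hg : Measurable g)
    (hf1 : (∫⁻ x, f x) < ∞) (hg1 : (∫⁻ x, g x) < ∞) :
    (∫⁻ x, (Ij d j θ f g x) ^ ((1 : ℝ) / 2)) ^ (2 : ℕ) ≤
      (2 : ℝ≥0∞) ^ ((d : ℤ) * j) * (3 ^ d * 5 ^ (2 * d) : ℝ≥0∞) *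
        (∫⁻ x, f x) * (∫⁻ x, g x) :=
  stmt5_general d j θ hθ f g hf hg
end

section
/- Let d ∈ ℕ. There exists a constant c > 0, depending only on d, such that for every θ ∈ [0,1], every j ∈ ℤ, and all Lebesgue-measurable sets E, A, B ⊆ ℝ^d of finite measure, (∫_E I_j^θ(χ_A, χ_B)(x)^{1/2} dx)² ≤ c |A| |E| min{2^{dj}, |B|}. -/
open MeasureTheory ENNReal Metric

lemma cs_aux {α : Type*} [MeasurableSpace α] (μ : Measure α) (F : α → ℝ≥0∞)
    (hF : AEMeasurable F μ) :
    (∫⁻ x, F x ^ ((1:ℝ)/2) ∂μ) ^ (2:ℕ) ≤ μ Set.univ * ∫⁻ x, F x ∂μ := by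
  have hmeas : AEMeasurable (fun x => F x ^ ((1:ℝ)/2)) μ := hF.pow_const _
  have h := ENNReal.lintegral_mul_le_Lp_mul_Lq μ (p := 2) (q := 2)
    ⟨by norm_num, by norm_num, by norm_num⟩ hmeas aemeasurable_const (g := fun _ => (1:ℝ≥0∞))
  simp only [Pi.mul_apply, mul_one, ENNReal.one_rpow, lintegral_one,
    ← ENNReal.rpow_natCast, ← ENNReal.rpow_mul] at h
  norm_num at h
  replace h := pow_le_pow_left₀ zero_le h 2
  refine le_trans ?_ (le_trans h ?_)
  · apply le_of_eq; norm_num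
  · rw [mul_pow, ← ENNReal.rpow_natCast ((∫⁻ a, F a ∂μ) ^ _),
      ← ENNReal.rpow_natCast (μ Set.univ ^ _), ← ENNReal.rpow_mul, ← ENNReal.rpow_mul]
    norm_num [mul_comm]

theorem stmt7 (d : ℕ) :
    ∃ c : ℝ, 0 < c ∧
      ∀ θ : ℝ, θ ∈ Set.Icc (0 : ℝ) 1 → ∀ j : ℤ,
        ∀ E A B : Set (EuclideanSpace ℝ (Fin d)),
          MeasurableSet E → MeasurableSet A → MeasurableSet B →
          volume E < ∞ → volume A < ∞ → volume B < ∞ →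
          (∫⁻ x in E, (Ij d j θ (A.indicator 1) (B.indicator 1) x) ^ ((1 : ℝ) / 2)) ^ (2 : ℕ) ≤
            ENNReal.ofReal c * volume A * volume E *
              min ((2 : ℝ≥0∞) ^ ((d : ℤ) * j)) (volume B) := by
  classical
  set X := EuclideanSpace ℝ (Fin d)
  set ι := volume (Metric.ball (0 : X) 1) with hιdef
  have hιfin : ι ≠ ∞ := measure_ball_lt_top.ne
  refine ⟨max ι.toReal 1, lt_of_lt_of_le one_pos (le_max_right _ _), ?_⟩
  have hcι : ι ≤ ENNReal.ofReal (max ι.toReal 1) := by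
    calc ι = ENNReal.ofReal ι.toReal := (ENNReal.ofReal_toReal hιfin).symm
    _ ≤ _ := ENNReal.ofReal_le_ofReal (le_max_left _ _)
  have hc1 : (1:ℝ≥0∞) ≤ ENNReal.ofReal (max ι.toReal 1) :=
    ENNReal.one_le_ofReal.2 (le_max_right _ _)
  intro θ _ j E A B hE hA hB hEfin hAfin hBfin
  set c := max ι.toReal 1
  set S := {y : X | ‖y‖ ≤ (2 : ℝ) ^ j} with hSdef
  have hSball : S = Metric.closedBall (0:X) ((2:ℝ)^j) := by
    ext y; simp [hSdef, Metric.mem_closedBall, dist_zero_right]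
  have hSmeas : volume S = (2:ℝ≥0∞) ^ ((d:ℤ)*j) * ι := by
    rw [hSball, Measure.addHaar_closedBall _ _ (by positivity : (0:ℝ) ≤ (2:ℝ)^j)]
    congr 1
    have : Module.finrank ℝ X = d := by simp [X]
    rw [this, ← zpow_natCast ((2:ℝ)^j), ← zpow_mul, ← Real.rpow_intCast,
      ← ENNReal.ofReal_rpow_of_pos (by norm_num), ENNReal.ofReal_ofNat,
      ENNReal.rpow_intCast, mul_comm]
  set f := A.indicator (1 : X → ℝ≥0∞) with hfdef
  set g := B.indicator (1 : X → ℝ≥0∞) with hgdef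
  have hf : Measurable f := measurable_one.indicator hA
  have hg : Measurable g := measurable_one.indicator hB
  have hf_le : ∀ x, f x ≤ 1 := fun x => Set.indicator_le_self' (fun _ _ => zero_le) x
  have hg_le : ∀ x, g x ≤ 1 := fun x => Set.indicator_le_self' (fun _ _ => zero_le) x
  have hfint : ∫⁻ x, f x = volume A := by
    simp [hfdef, lintegral_indicator hA]
  have hgint : ∫⁻ x, g x = volume B := by
    simp [hgdef, lintegral_indicator hB]
  -- joint measurability
  have hk : Measurable fun p : X × X => f (p.1 + (θ - 1) • p.2) * g (p.1 + θ • p.2) :=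
    (hf.comp (measurable_fst.add (measurable_snd.const_smul (θ - 1)))).mul
      (hg.comp (measurable_fst.add (measurable_snd.const_smul θ)))
  have hF : Measurable (Ij d j θ f g) := by
    have : Ij d j θ f g = fun x => ∫⁻ y, (fun p : X × X =>
        f (p.1 + (θ - 1) • p.2) * g (p.1 + θ • p.2)) (x, y) ∂(volume.restrict S) := rfl
    rw [this]
    exact hk.lintegral_prod_right'
  -- Cauchy-Schwarz
  have cs : (∫⁻ x in E, (Ij d j θ f g x) ^ ((1:ℝ)/2)) ^ (2:ℕ) ≤
      volume E * ∫⁻ x in E, Ij d j θ f g x := by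
    have := cs_aux (volume.restrict E) (Ij d j θ f g) hF.aemeasurable
    rwa [Measure.restrict_apply_univ] at this
  -- Bound (a): ∫_E Ij ≤ volume S * volume A
  have bndA : ∫⁻ x in E, Ij d j θ f g x ≤ volume S * volume A := by
    calc ∫⁻ x in E, Ij d j θ f g x ≤ ∫⁻ x, Ij d j θ f g x :=
          setLIntegral_le_lintegral _ _
    _ ≤ ∫⁻ x, ∫⁻ y in S, f (x + (θ - 1) • y) ∂volume := by
          refine lintegral_mono fun x => lintegral_mono fun y => ?_
          calc f (x + (θ - 1) • y) * g (x + θ • y) ≤ f (x + (θ - 1) • y) * 1 := by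
                gcongr; exact hg_le _
          _ = f (x + (θ - 1) • y) := mul_one _
    _ = ∫⁻ y in S, ∫⁻ x, f (x + (θ - 1) • y) ∂volume ∂volume := by
          apply lintegral_lintegral_swap
          exact (hf.comp (measurable_fst.add (measurable_snd.const_smul (θ - 1)))).aemeasurable
    _ = ∫⁻ y in S, volume A ∂volume := by
          refine lintegral_congr fun y => ?_
          rw [lintegral_add_right_eq_self f ((θ-1) • y), hfint]
    _ = volume S * volume A := by rw [setLIntegral_const, mul_comm]
  -- Bound (b): ∫_E Ij ≤ volume A * volume B
  have key : ∀ (x y : X), x + (θ - 1) • y + y = x + θ • y := by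
    intro x y; rw [sub_smul, one_smul]; abel
  have bndB : ∫⁻ x in E, Ij d j θ f g x ≤ volume A * volume B := by
    calc ∫⁻ x in E, Ij d j θ f g x ≤ ∫⁻ x, Ij d j θ f g x :=
          setLIntegral_le_lintegral _ _
    _ ≤ ∫⁻ x, ∫⁻ y, f (x + (θ - 1) • y) * g (x + θ • y) ∂volume := by
          exact lintegral_mono fun x => setLIntegral_le_lintegral _ _
    _ = ∫⁻ y, ∫⁻ x, f (x + (θ - 1) • y) * g (x + θ • y) ∂volume ∂volume := by
          apply lintegral_lintegral_swap
          exact hk.aemeasurable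
    _ = ∫⁻ y, ∫⁻ u, f u * g (u + y) ∂volume ∂volume := by
          refine lintegral_congr fun y => ?_
          have := lintegral_add_right_eq_self (μ := volume) (fun u => f u * g (u + y)) ((θ-1) • y)
          simp only [key] at this
          exact this
    _ = ∫⁻ u, ∫⁻ y, f u * g (u + y) ∂volume ∂volume := by
          symm; apply lintegral_lintegral_swap
          exact ((hf.comp measurable_fst).mul
            (hg.comp (measurable_fst.add measurable_snd))).aemeasurable
    _ = ∫⁻ u, f u * volume B ∂volume := by
          refine lintegral_congr fun u => ?_
          rw [lintegral_const_mul' _ _ (lt_of_le_of_lt (hf_le u) one_lt_top).ne]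
          congr 1
          rw [lintegral_add_left_eq_self g u, hgint]
    _ = volume A * volume B := by rw [lintegral_mul_const _ hf, hfint]
  -- combine
  rcases le_total ((2:ℝ≥0∞) ^ ((d:ℤ)*j)) (volume B) with hmin | hmin
  · rw [min_eq_left hmin]
    calc (∫⁻ x in E, (Ij d j θ f g x) ^ ((1:ℝ)/2)) ^ (2:ℕ)
        ≤ volume E * (volume S * volume A) := le_trans cs (by gcongr)
      _ ≤ volume E * ((2:ℝ≥0∞) ^ ((d:ℤ)*j) * ENNReal.ofReal c * volume A) := by
          rw [hSmeas]; gcongr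
      _ = ENNReal.ofReal c * volume A * volume E * (2:ℝ≥0∞) ^ ((d:ℤ)*j) := by ring
  · rw [min_eq_right hmin]
    calc (∫⁻ x in E, (Ij d j θ f g x) ^ ((1:ℝ)/2)) ^ (2:ℕ)
        ≤ volume E * (volume A * volume B) := le_trans cs (by gcongr)
      _ ≤ volume E * (ENNReal.ofReal c * (volume A * volume B)) := by
          exact mul_le_mul_right (le_mul_of_one_le_left zero_le hc1) _
      _ = ENNReal.ofReal c * volume A * volume E * volume B := by ring
end

section
/- Let d ∈ ℕ, let f : ℝ^d → ℝ be continuously differentiable, and fix y ∈ ℝ^d. Then the vector field F : ℝ^d → ℝ^d defined by F(x) = ∫_0^1 f(x + (θ−1)y) f(x + θy) · y dθ is differentiable, and its divergence satisfies ∇_x · F(x) = − f(x) ( f(x − y) − f(x + y) ) for every x ∈ ℝ^d. -/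
/-!
With `φ z = f (z - y) * f z` the integrand is `φ (x + θ • y) • y`, so the field is
`x ↦ (∫₀¹ φ (x + θ • y) dθ) • y`, a rank-one field whose divergence is the derivative of the
average along `y`. Differentiating under the integral sign (legitimate because `fderiv φ` is
continuous, hence bounded near the compact segment) this is `∫₀¹ (d/dθ) φ (x + θ • y) dθ`, which
the fundamental theorem of calculus turns into `φ (x + y) - φ x = f x * f (x + y) - f (x - y) * f x`.
-/

open MeasureTheory Set Filter Topology

section SegmentAverage

variable {E G : Type*} [NormedAddCommGroup E] [NormedSpace ℝ E]
  [NormedAddCommGroup G] [NormedSpace ℝ G] {φ : E → G}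

theorem hasFDerivAt_setIntegral_Icc_comp_add_smul (hφ : ContDiff ℝ 1 φ) (y x₀ : E) :
    HasFDerivAt (fun x => ∫ θ in Icc (0 : ℝ) 1, φ (x + θ • y))
      (∫ θ in Icc (0 : ℝ) 1, fderiv ℝ φ (x₀ + θ • y)) x₀ := by
  have hφ' : Continuous (fderiv ℝ φ) := hφ.continuous_fderiv one_ne_zero
  have hshift : ∀ x : E, Continuous fun θ : ℝ => x + θ • y := fun x => by fun_prop
  -- Compactness of the segment gives a bound on `fderiv ℝ φ` uniform in `x` near `x₀`.
  have hnear : ∀ᶠ x in 𝓝 x₀, ∀ θ ∈ Icc (0 : ℝ) 1,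
      dist (fderiv ℝ φ (x + θ • y)) (fderiv ℝ φ (x₀ + θ • y)) < 1 := by
    refine isCompact_Icc.eventually_forall_of_forall_eventually fun θ _ => ?_
    have hcont : Continuous fun z : E × ℝ =>
        dist (fderiv ℝ φ (z.1 + z.2 • y)) (fderiv ℝ φ (x₀ + z.2 • y)) := by fun_prop
    exact hcont.continuousAt.eventually_lt continuousAt_const (by simp)
  obtain ⟨s, hs, hs_near⟩ := hnear.exists_mem
  refine hasFDerivAt_integral_of_dominated_of_fderiv_le
    (F' := fun x θ => fderiv ℝ φ (x + θ • y)) (bound := fun θ => ‖fderiv ℝ φ (x₀ + θ • y)‖ + 1)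
    hs (Eventually.of_forall fun x =>
      (hφ.continuous.comp (hshift x)).aestronglyMeasurable.restrict)
    (hφ.continuous.comp (hshift x₀)).integrableOn_Icc
    (hφ'.comp (hshift x₀)).aestronglyMeasurable.restrict ?_
    ((hφ'.comp (hshift x₀)).norm.add continuous_const).integrableOn_Icc ?_
  · filter_upwards [ae_restrict_mem measurableSet_Icc] with θ hθ x hx
    have hclose := hs_near x hx θ hθ
    rw [dist_eq_norm] at hclose
    linarith [norm_le_norm_add_norm_sub' (fderiv ℝ φ (x + θ • y)) (fderiv ℝ φ (x₀ + θ • y))]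
  · refine Eventually.of_forall fun θ x _ => ?_
    exact ((hφ.differentiable one_ne_zero _).hasFDerivAt).comp x ((hasFDerivAt_id x).add_const _)

theorem setIntegral_Icc_fderiv_comp_add_smul_apply [CompleteSpace G] (hφ : ContDiff ℝ 1 φ)
    (x y : E) :
    (∫ θ in Icc (0 : ℝ) 1, fderiv ℝ φ (x + θ • y)) y = φ (x + y) - φ x := by
  have hφ' : Continuous fun θ : ℝ => fderiv ℝ φ (x + θ • y) :=
    (hφ.continuous_fderiv one_ne_zero).comp (by fun_prop)
  have hderiv : ∀ θ : ℝ, HasDerivAt (fun θ : ℝ => φ (x + θ • y)) (fderiv ℝ φ (x + θ • y) y) θ :=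
    fun θ => (hφ.differentiable one_ne_zero _).hasFDerivAt.comp_hasDerivAt θ
      (((hasDerivAt_id θ).smul_const y).const_add x |>.congr_deriv (one_smul ℝ y))
  rw [ContinuousLinearMap.integral_apply hφ'.integrableOn_Icc, integral_Icc_eq_integral_Ioc,
    ← intervalIntegral.integral_of_le zero_le_one,
    intervalIntegral.integral_eq_sub_of_hasDerivAt (fun θ _ => hderiv θ)
      ((hφ'.clm_apply continuous_const).intervalIntegrable 0 1)]
  simp

end SegmentAverage

theorem EuclideanSpace.sum_smulRight_single_apply {d : ℕ} (L : EuclideanSpace ℝ (Fin d) →L[ℝ] ℝ)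
    (y : EuclideanSpace ℝ (Fin d)) :
    ∑ i, L.smulRight y (EuclideanSpace.single i 1) i = L y := by
  conv_rhs => rw [← (EuclideanSpace.basisFun (Fin d) ℝ).sum_repr y]
  simp [mul_comm]

theorem stmt18 (d : ℕ) (f : EuclideanSpace ℝ (Fin d) → ℝ)
    (hf : ContDiff ℝ 1 f) (y : EuclideanSpace ℝ (Fin d)) :
    Differentiable ℝ (fun x : EuclideanSpace ℝ (Fin d) =>
      ∫ θ in Set.Icc (0 : ℝ) 1, (f (x + (θ - 1) • y) * f (x + θ • y)) • y) ∧
    ∀ x : EuclideanSpace ℝ (Fin d),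
      (∑ i : Fin d,
        fderiv ℝ (fun x : EuclideanSpace ℝ (Fin d) =>
          ∫ θ in Set.Icc (0 : ℝ) 1, (f (x + (θ - 1) • y) * f (x + θ • y)) • y) x
          (EuclideanSpace.single i 1) i) =
      -(f x * (f (x - y) - f (x + y))) := by
  set φ : EuclideanSpace ℝ (Fin d) → ℝ := fun z => f (z - y) * f z
  have hφ : ContDiff ℝ 1 φ := (hf.comp (contDiff_id.sub contDiff_const)).mul hf
  have hF : ∀ x₀, HasFDerivAt (fun x : EuclideanSpace ℝ (Fin d) =>
      ∫ θ in Icc (0 : ℝ) 1, (f (x + (θ - 1) • y) * f (x + θ • y)) • y)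
      ((∫ θ in Icc (0 : ℝ) 1, fderiv ℝ φ (x₀ + θ • y)).smulRight y) x₀ := by
    intro x₀
    have hpt : ∀ (x : EuclideanSpace ℝ (Fin d)) (θ : ℝ), x + (θ - 1) • y = x + θ • y - y :=
      fun x θ => by rw [sub_smul, one_smul, add_sub_assoc]
    simp_rw [hpt, integral_smul_const]
    exact (hasFDerivAt_setIntegral_Icc_comp_add_smul hφ y x₀).smul_const y
  refine ⟨fun x => (hF x).differentiableAt, fun x => ?_⟩
  rw [(hF x).fderiv, EuclideanSpace.sum_smulRight_single_apply,
    setIntegral_Icc_fderiv_comp_add_smul_apply hφ]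
  simp only [φ, add_sub_cancel_right]
  ring
end
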